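/- There exists a constant C > 0 such that for all ν > 0, γ₀, γ₁ ∈ (0,1), γ₂ > 0, and 0 < t ≤ T with T = ν⁻¹γ₀²γ₁², the integral of h₁(t,·) over [0, ỹ(t)] (where ỹ(t) is the unique positive zero of h₁(t,·)) satisfies ∫₀^{ỹ(t)} h₁(t,y) dy ≥ −C·γ₂·νt/(γ₀⁴γ₁). -/

import Mathlib

open MeasureTheory Real Filter Set

noncomputable section

/-- The function `h₁(t,y) = γ₂·γ₁³·(4νt+γ₀²γ₁²)^{−3/2}·exp(−y²/(4νt+γ₀²γ₁²))
  − γ₂·γ₀^{−3}·exp(−y²/(γ₀²γ₁²))` from the proof of Proposition 2.4. -/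
def h1fun (ν γ₀ γ₁ γ₂ : ℝ) (t y : ℝ) : ℝ :=
  γ₂ * γ₁^3 / (Real.sqrt (4*ν*t + γ₀^2*γ₁^2))^3 * Real.exp (-y^2 / (4*ν*t + γ₀^2*γ₁^2))
    - γ₂ / γ₀^3 * Real.exp (-y^2 / (γ₀^2*γ₁^2))

/-- The unique positive zero `ỹ(t)` of `h₁(t,·)` (for `t > 0`). -/
def ytil (ν γ₀ γ₁ : ℝ) (t : ℝ) : ℝ :=
  Real.sqrt ((4*ν*t + γ₀^2*γ₁^2) * γ₀^2 * γ₁^2 / (4*ν*t)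
    * Real.log ((Real.sqrt (4*ν*t + γ₀^2*γ₁^2))^3 / (γ₀^3 * γ₁^3)))

/-! A difference of two centred Gaussians whose narrower one has the larger amplitude is
bounded below by the difference of the amplitudes, which for `h₁(t,·)` is `O(νt)`; the zero
`ỹ(t)` stays below a fixed multiple of `γ₀γ₁`, because `log x ≤ x - 1` cancels the factor
`1/(4νt)` in its definition. Integrating the pointwise bound over `[0, ỹ(t)]` gives the
estimate. -/

lemma sub_le_mul_exp_sub_mul_exp {A B a b : ℝ} (y : ℝ) (hA : 0 ≤ A) (hAB : A ≤ B)
    (hb : 0 < b) (hba : b ≤ a) :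
    A - B ≤ A * exp (-y^2 / a) - B * exp (-y^2 / b) := by
  have hexp : exp (-y^2 / b) ≤ exp (-y^2 / a) := by
    rw [exp_le_exp, neg_div, neg_div, neg_le_neg_iff]
    exact div_le_div_of_nonneg_left (sq_nonneg y) hb hba
  have hexp_le_one : exp (-y^2 / b) ≤ 1 := exp_le_one_iff.mpr (by
    rw [neg_div]; exact neg_nonpos.mpr (by positivity))
  nlinarith [mul_le_mul_of_nonneg_left hexp hA,
    mul_nonneg (sub_nonneg.2 hAB) (sub_nonneg.2 hexp_le_one)]

lemma one_sub_pow_three_div_sqrt_le {d s : ℝ} (hd : 0 ≤ d) (hs : 0 < s) :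
    1 - s^3 / √(d + s^2)^3 ≤ 3 * d / (d + s^2) := by
  set r := s / √(d + s^2)
  have hr_sq : r^2 = s^2 / (d + s^2) := by rw [div_pow, sq_sqrt (by positivity)]
  have hr_le_one : r ≤ 1 :=
    div_le_one_of_le₀ ((le_sqrt' hs).2 (by linarith)) (sqrt_nonneg _)
  have hr_nonneg : 0 ≤ r := by positivity
  calc 1 - s^3 / √(d + s^2)^3 = 1 - r^3 := by rw [div_pow]
    _ ≤ 3 * (1 - r^2) := by nlinarith [mul_nonneg hr_nonneg (sub_nonneg.2 hr_le_one)]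
    _ = 3 * d / (d + s^2) := by rw [hr_sq]; field_simp; ring

lemma log_sqrt_pow_three_div_le {d s : ℝ} (hd : 0 ≤ d) (hs : 0 < s) :
    log (√(d + s^2)^3 / s^3) ≤ 3 * d / (2 * s^2) := by
  have hsqrt : √(d + s^2) ≤ s + d / (2 * s) :=
    sqrt_le_iff.mpr ⟨by positivity, by field_simp; nlinarith [sq_nonneg d]⟩
  calc log (√(d + s^2)^3 / s^3) = 3 * log (√(d + s^2) / s) := by
        rw [← div_pow, log_pow]; norm_num
    _ ≤ 3 * (√(d + s^2) / s - 1) := by gcongr; exact log_le_sub_one_of_pos (by positivity)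
    _ ≤ 3 * ((s + d / (2 * s)) / s - 1) := by gcongr
    _ = 3 * d / (2 * s^2) := by field_simp; ring

section

variable {ν γ₀ γ₁ γ₂ t : ℝ}

lemma continuous_h1fun : Continuous (h1fun ν γ₀ γ₁ γ₂ t) := by
  unfold h1fun; fun_prop

lemma h1fun_amplitude_le (hγ₀ : 0 < γ₀) (hγ₁ : 0 < γ₁) (hγ₂ : 0 ≤ γ₂) (hνt : 0 ≤ ν * t) :
    γ₂ * γ₁^3 / √(4*ν*t + γ₀^2*γ₁^2)^3 ≤ γ₂ / γ₀^3 := by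
  have hs : γ₀ * γ₁ ≤ √(4*ν*t + γ₀^2*γ₁^2) := (le_sqrt' (by positivity)).2 (by nlinarith)
  calc γ₂ * γ₁^3 / √(4*ν*t + γ₀^2*γ₁^2)^3 ≤ γ₂ * γ₁^3 / (γ₀ * γ₁)^3 := by gcongr
    _ = γ₂ / γ₀^3 := by field_simp

lemma h1fun_amplitude_gap_le (hγ₀ : 0 < γ₀) (hγ₁ : 0 < γ₁) (hγ₂ : 0 ≤ γ₂)
    (hνt : 0 ≤ ν * t) :
    γ₂ / γ₀^3 - γ₂ * γ₁^3 / √(4*ν*t + γ₀^2*γ₁^2)^3 ≤ 12 * γ₂ * ν * t / (γ₀^5 * γ₁^2) := by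
  have hd : 0 ≤ 4*ν*t := by linarith
  have hgap := one_sub_pow_three_div_sqrt_le hd (mul_pos hγ₀ hγ₁)
  simp only [mul_pow] at hgap
  calc γ₂ / γ₀^3 - γ₂ * γ₁^3 / √(4*ν*t + γ₀^2*γ₁^2)^3
      = γ₂ / γ₀^3 * (1 - γ₀^3 * γ₁^3 / √(4*ν*t + γ₀^2*γ₁^2)^3) := by field_simp
    _ ≤ γ₂ / γ₀^3 * (3 * (4*ν*t) / (4*ν*t + γ₀^2*γ₁^2)) := by gcongr
    _ ≤ γ₂ / γ₀^3 * (3 * (4*ν*t) / (γ₀^2*γ₁^2)) := by gcongr; linarith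
    _ = 12 * γ₂ * ν * t / (γ₀^5 * γ₁^2) := by field_simp; ring

lemma amplitude_sub_le_h1fun (hγ₀ : 0 < γ₀) (hγ₁ : 0 < γ₁) (hγ₂ : 0 ≤ γ₂) (hνt : 0 ≤ ν * t)
    (y : ℝ) :
    γ₂ * γ₁^3 / √(4*ν*t + γ₀^2*γ₁^2)^3 - γ₂ / γ₀^3 ≤ h1fun ν γ₀ γ₁ γ₂ t y :=
  sub_le_mul_exp_sub_mul_exp y (by positivity) (h1fun_amplitude_le hγ₀ hγ₁ hγ₂ hνt)
    (by positivity) (by linarith)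

lemma ytil_le_three_mul (hγ₀ : 0 < γ₀) (hγ₁ : 0 < γ₁) (hνt : 0 < ν * t)
    (hνt_le : ν * t ≤ γ₀^2 * γ₁^2) :
    ytil ν γ₀ γ₁ t ≤ 3 * (γ₀ * γ₁) := by
  have hd : 0 < 4*ν*t := by linarith
  have hlog := log_sqrt_pow_three_div_le hd.le (mul_pos hγ₀ hγ₁)
  simp only [mul_pow] at hlog
  refine sqrt_le_iff.mpr ⟨by positivity, ?_⟩
  calc (4*ν*t + γ₀^2*γ₁^2) * γ₀^2 * γ₁^2 / (4*ν*t)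
        * log (√(4*ν*t + γ₀^2*γ₁^2)^3 / (γ₀^3 * γ₁^3))
      ≤ (4*ν*t + γ₀^2*γ₁^2) * γ₀^2 * γ₁^2 / (4*ν*t) * (3 * (4*ν*t) / (2 * (γ₀^2*γ₁^2))) :=
        mul_le_mul_of_nonneg_left hlog (div_nonneg (by positivity) hd.le)
    _ = 3 / 2 * (4*ν*t + γ₀^2*γ₁^2) := by field_simp; exact div_self hνt.ne'
    _ ≤ (3 * (γ₀ * γ₁))^2 := by nlinarith

end

/-- estimate of the integral of the negative part of `h₁`, proof of
Proposition 2.4. There is `C > 0` such that for all parameters and all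
`0 < t ≤ T = ν⁻¹γ₀²γ₁²`, `∫₀^{ỹ(t)} h₁(t,y) dy ≥ −C·γ₂·νt/(γ₀⁴γ₁)`. -/
theorem h1_negative_part_integral :
    ∃ C : ℝ, 0 < C ∧ ∀ ν γ₀ γ₁ γ₂ t : ℝ, 0 < ν →
      γ₀ ∈ Set.Ioo (0:ℝ) 1 → γ₁ ∈ Set.Ioo (0:ℝ) 1 → 0 < γ₂ →
      0 < t → t ≤ ν⁻¹ * γ₀^2 * γ₁^2 →
      -(C * γ₂ * ν * t / (γ₀^4 * γ₁))
        ≤ ∫ y in (0:ℝ)..(ytil ν γ₀ γ₁ t), h1fun ν γ₀ γ₁ γ₂ t y := by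
  refine ⟨36, by norm_num, fun ν γ₀ γ₁ γ₂ t hν ⟨hγ₀, _⟩ ⟨hγ₁, _⟩ hγ₂ ht hT => ?_⟩
  have hνt : 0 < ν * t := mul_pos hν ht
  have hνt_le : ν * t ≤ γ₀^2 * γ₁^2 := by
    calc ν * t ≤ ν * (ν⁻¹ * γ₀^2 * γ₁^2) := by gcongr
      _ = γ₀^2 * γ₁^2 := by field_simp
  set M := γ₂ / γ₀^3 - γ₂ * γ₁^3 / √(4*ν*t + γ₀^2*γ₁^2)^3
  have hM_nonneg : 0 ≤ M := sub_nonneg.2 (h1fun_amplitude_le hγ₀ hγ₁ hγ₂.le hνt.le)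
  have hM_le := h1fun_amplitude_gap_le hγ₀ hγ₁ hγ₂.le hνt.le
  have hytil_le := ytil_le_three_mul hγ₀ hγ₁ hνt hνt_le
  have hintegral : ∫ _ in (0:ℝ)..(ytil ν γ₀ γ₁ t), -M
      ≤ ∫ y in (0:ℝ)..(ytil ν γ₀ γ₁ t), h1fun ν γ₀ γ₁ γ₂ t y :=
    intervalIntegral.integral_mono_on (sqrt_nonneg _) intervalIntegrable_const
      (continuous_h1fun.intervalIntegrable _ _)
      fun y _ => (neg_sub _ _).trans_le (amplitude_sub_le_h1fun hγ₀ hγ₁ hγ₂.le hνt.le y)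
  rw [intervalIntegral.integral_const, smul_eq_mul, sub_zero] at hintegral
  calc -(36 * γ₂ * ν * t / (γ₀^4 * γ₁))
      = -(3 * (γ₀ * γ₁) * (12 * γ₂ * ν * t / (γ₀^5 * γ₁^2))) := by field_simp; ring
    _ ≤ -(ytil ν γ₀ γ₁ t * M) := by gcongr
    _ = ytil ν γ₀ γ₁ t * -M := by ring
    _ ≤ _ := hintegral
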